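/- arXiv:1111.7146 — 5 statements merged into one kernel-verified Lean document; each statement's English description precedes it below -/
import Mathlib

section
/- Let P be a discrete Borel probability measure on ℝ and let η ∈ [0,∞) be such that whenever x, y ∈ ℝ satisfy 0 < |x − y| < η, at least one of P({x}), P({y}) vanishes. Then for every s ∈ [1,∞), η · β_s(P) ≤ 2 · β_{s+1}(P). -/
open MeasureTheory ProbabilityTheory Real Filter Set ENNReal
open scoped Classical

noncomputable def mu (P : Measure ℝ) : ℝ := ∫ x, x ∂P

/-- The absolute central moment `β_s(P) ∈ [0,∞]`, set to `∞` when the first absolute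
moment of `P` is infinite. -/

noncomputable def betaE (s : ℝ) (P : Measure ℝ) : ℝ≥0∞ :=
  if Integrable (fun x : ℝ => x) P then ∫⁻ x, ENNReal.ofReal (|x - mu P| ^ s) ∂P else ∞

/-- A measure on `ℝ` is discrete if it is a (countable) sum of point masses, i.e. the
measure of every (Borel) set is the sum of the masses of its points. -/
def IsDiscreteMeasureR (P : Measure ℝ) : Prop :=
  ∀ A : Set ℝ, MeasurableSet A → P A = ∑' x : A, P {(x : ℝ)}

/-- Atoms of `P` are at mutual distance `≥ η`. -/
def Separated (P : Measure ℝ) (η : ℝ) : Prop :=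
  ∀ x y : ℝ, 0 < |x - y| → |x - y| < η → P {x} = 0 ∨ P {y} = 0

/-! Write `t = |x - μ|`. The claim is `∫ t ^ s (2t - η) dP ≥ 0`, and only atoms with `t < η / 2`
contribute negatively; by separation there is at most one such atom `a`, at distance
`b = |a - μ| < η / 2`, and every other atom has `t ≥ η - b`. On those atoms the integrand is at
least `(η - 2b) b ^ (s - 1) t`, which is exactly minus its value at `a`. Hence the integrand
dominates a linear function `c (x - μ)` almost everywhere, and the latter integrates to zero. -/

section VonMises

variable {P : Measure ℝ}

lemma IsDiscreteMeasureR.measure_eq_zero (hdisc : IsDiscreteMeasureR P) {A : Set ℝ}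
    (hA : MeasurableSet A) (h : ∀ x ∈ A, P {x} = 0) : P A = 0 := by
  rw [hdisc A hA]
  exact ENNReal.tsum_eq_zero.2 fun x => h x x.2

lemma IsDiscreteMeasureR.exists_atom (hdisc : IsDiscreteMeasureR P) {A : Set ℝ}
    (hA : MeasurableSet A) (h : P A ≠ 0) : ∃ a ∈ A, P {a} ≠ 0 := by
  by_contra! hnone
  exact h (hdisc.measure_eq_zero hA hnone)

lemma Separated.ae_eq_or_le_abs_sub {η : ℝ} (hsep : Separated P η)
    (hdisc : IsDiscreteMeasureR P) {a : ℝ} (ha : P {a} ≠ 0) :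
    ∀ᵐ x ∂P, x = a ∨ η ≤ |x - a| := by
  have hnull : P {x | x ≠ a ∧ |x - a| < η} = 0 := by
    refine hdisc.measure_eq_zero ?_ fun x ⟨hxa, hxη⟩ => ?_
    · exact (measurableSet_singleton a).compl.inter
        (measurableSet_lt (measurable_id.sub_const a).abs measurable_const)
    · exact (hsep x a (abs_pos.2 (sub_ne_zero.2 hxa)) hxη).resolve_right ha
  filter_upwards [measure_eq_zero_iff_ae_notMem.1 hnull] with x hx
  by_contra! h
  exact hx ⟨h.1, h.2⟩

lemma mul_le_rpow_mul_two_mul_sub {s η b t : ℝ} (hs : 1 ≤ s) (hb : 0 ≤ b) (hbη : 2 * b ≤ η)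
    (ht : η - b ≤ t) : (η - 2 * b) * b ^ (s - 1) * t ≤ t ^ s * (2 * t - η) := by
  have hbt : b ≤ t := by linarith
  have ht0 : 0 ≤ t := hb.trans hbt
  have hpow : t ^ s = t ^ (s - 1) * t := by
    rw [← rpow_add_one' ht0 (by linarith), sub_add_cancel]
  rw [hpow, mul_comm (η - 2 * b), mul_right_comm (t ^ (s - 1))]
  have hpow_le : b ^ (s - 1) ≤ t ^ (s - 1) := rpow_le_rpow hb hbt (by linarith)
  exact mul_le_mul_of_nonneg_right
    (mul_le_mul hpow_le (by linarith) (by linarith) (rpow_nonneg ht0 _)) ht0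

lemma exists_ae_mul_sub_le_rpow_mul {η s : ℝ} (hdisc : IsDiscreteMeasureR P)
    (hsep : Separated P η) (hs : 1 ≤ s) (m : ℝ) :
    ∃ c : ℝ, ∀ᵐ x ∂P, c * (x - m) ≤ |x - m| ^ s * (2 * |x - m| - η) := by
  have hnear : MeasurableSet {x : ℝ | |x - m| < η / 2} :=
    measurableSet_lt (measurable_id.sub_const m).abs measurable_const
  by_cases hP : P {x | |x - m| < η / 2} = 0
  · refine ⟨0, ?_⟩
    filter_upwards [measure_eq_zero_iff_ae_notMem.1 hP] with x hx
    simp only [not_lt] at hx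
    rw [zero_mul]
    exact mul_nonneg (rpow_nonneg (abs_nonneg _) s) (by linarith)
  obtain ⟨a, ha, hPa⟩ := hdisc.exists_atom hnear hP
  set b := |a - m| with hb_def
  have hb : 0 ≤ b := abs_nonneg _
  have hbη : 2 * b ≤ η := by linarith [show b < η / 2 from ha]
  set k := (η - 2 * b) * b ^ (s - 1)
  have hk : 0 ≤ k := mul_nonneg (by linarith) (rpow_nonneg hb _)
  -- the slope `±k` is chosen so that the linear function is tight at the atom `a`
  obtain ⟨c, hck, hca⟩ : ∃ c, |c| ≤ k ∧ c * (a - m) = -(k * b) := by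
    rcases le_total 0 (a - m) with h | h
    · exact ⟨-k, by rw [abs_neg, abs_of_nonneg hk], by rw [hb_def, abs_of_nonneg h]; ring⟩
    · exact ⟨k, (abs_of_nonneg hk).le, by rw [hb_def, abs_of_nonpos h]; ring⟩
  refine ⟨c, ?_⟩
  filter_upwards [hsep.ae_eq_or_le_abs_sub hdisc hPa] with x hx
  rcases hx with rfl | hfar
  · rw [hca, ← hb_def, ← sub_add_cancel s 1, rpow_add_one' hb (by linarith)]
    linarith [show k * b = b ^ (s - 1) * b * (η - 2 * b) by ring]
  · have hxm : η - b ≤ |x - m| := by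
      linarith [abs_sub_le x m a, abs_sub_comm m a]
    calc c * (x - m) ≤ |c| * |x - m| := by rw [← abs_mul]; exact le_abs_self _
      _ ≤ k * |x - m| := by gcongr
      _ ≤ |x - m| ^ s * (2 * |x - m| - η) := mul_le_rpow_mul_two_mul_sub hs hb hbη hxm

lemma integral_nonneg_of_ae_mul_sub_mu_le [IsProbabilityMeasure P]
    (hint : Integrable (fun x : ℝ => x) P) {f : ℝ → ℝ} (hf : Integrable f P) {c : ℝ}
    (h : ∀ᵐ x ∂P, c * (x - mu P) ≤ f x) : 0 ≤ ∫ x, f x ∂P := by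
  have hmean : ∫ x, c * (x - mu P) ∂P = 0 := by
    rw [integral_const_mul, integral_sub hint (integrable_const _), integral_const]
    simp [mu]
  calc 0 = ∫ x, c * (x - mu P) ∂P := hmean.symm
    _ ≤ ∫ x, f x ∂P := integral_mono_ae ((hint.sub (integrable_const _)).const_mul c) hf h

lemma mul_integral_rpow_le [IsProbabilityMeasure P]
    (hdisc : IsDiscreteMeasureR P) {η : ℝ} (hsep : Separated P η) {s : ℝ} (hs : 1 ≤ s)
    (hint : Integrable (fun x : ℝ => x) P)
    (hint_s : Integrable (fun x => |x - mu P| ^ s) P)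
    (hint_s1 : Integrable (fun x => |x - mu P| ^ (s + 1)) P) :
    η * ∫ x, |x - mu P| ^ s ∂P ≤ 2 * ∫ x, |x - mu P| ^ (s + 1) ∂P := by
  have hsplit : ∀ x : ℝ, |x - mu P| ^ s * (2 * |x - mu P| - η)
      = 2 * |x - mu P| ^ (s + 1) - η * |x - mu P| ^ s := fun x => by
    rw [rpow_add_one' (abs_nonneg _) (by linarith)]; ring
  obtain ⟨c, hc⟩ := exists_ae_mul_sub_le_rpow_mul hdisc hsep hs (mu P)
  have := integral_nonneg_of_ae_mul_sub_mu_le hint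
    (f := fun x => 2 * |x - mu P| ^ (s + 1) - η * |x - mu P| ^ s)
    ((hint_s1.const_mul 2).sub (hint_s.const_mul η)) (by simpa only [hsplit] using hc)
  rw [integral_sub (hint_s1.const_mul 2) (hint_s.const_mul η), integral_const_mul,
    integral_const_mul] at this
  linarith

end VonMises

theorem von_mises_inequality_general (P : Measure ℝ) (hP : IsProbabilityMeasure P)
    (hdisc : IsDiscreteMeasureR P) (η : ℝ) (hsep : Separated P η) :
    ∀ s : ℝ, 1 ≤ s → ENNReal.ofReal η * betaE s P ≤ 2 * betaE (s + 1) P := by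
  intro s hs
  by_cases hint : Integrable (fun x : ℝ => x) P
  swap
  · simp [betaE, hint]
  have hmeas : ∀ r : ℝ, AEStronglyMeasurable (fun x => |x - mu P| ^ r) P := fun r =>
    ((measurable_id.sub_const _).abs.pow_const r).aestronglyMeasurable
  have hnonneg : ∀ r : ℝ, 0 ≤ᵐ[P] fun x => |x - mu P| ^ r := fun r =>
    Eventually.of_forall fun x => rpow_nonneg (abs_nonneg _) r
  simp only [betaE, if_pos hint]
  by_cases hfin : ∫⁻ x, ENNReal.ofReal (|x - mu P| ^ (s + 1)) ∂P = ∞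
  · simp [hfin]
  have hint_s1 := (lintegral_ofReal_ne_top_iff_integrable (hmeas _) (hnonneg _)).1 hfin
  have hint_s : Integrable (fun x => |x - mu P| ^ s) P :=
    integrable_norm_rpow_of_le (hint.sub (integrable_const _)).1 (by linarith) (by linarith)
      (by linarith) hint_s1
  rw [← ofReal_integral_eq_lintegral_ofReal hint_s (hnonneg s),
    ← ofReal_integral_eq_lintegral_ofReal hint_s1 (hnonneg (s + 1)),
    ← ENNReal.ofReal_mul' (integral_nonneg_of_ae (hnonneg s)), ← ENNReal.ofReal_ofNat 2,
    ← ENNReal.ofReal_mul zero_le_two]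
  exact ENNReal.ofReal_le_ofReal (mul_integral_rpow_le hdisc hsep hs hint hint_s hint_s1)

/-- von Mises inequality: for a discrete probability law whose atoms are at
mutual distance `≥ η`, one has `η·β_s ≤ 2·β_{s+1}` in `[0,∞]` for every `s ∈ [1,∞)`. -/
theorem von_mises_inequality (P : Measure ℝ) (hP : IsProbabilityMeasure P)
    (hdisc : IsDiscreteMeasureR P) (η : ℝ) (hη : 0 ≤ η) (hsep : Separated P η) :
    ∀ s : ℝ, 1 ≤ s → ENNReal.ofReal η * betaE s P ≤ 2 * betaE (s + 1) P :=
  von_mises_inequality_general P hP hdisc η hsep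
end

section
/- Let h > 0 and 0 ≤ α ≤ h, and define f : ℝ → ℝ by f(y) = (h + α/3)/√(2π) + h·φ(y) + (α/3)·φ''(y), where φ(y) = e^{−y²/2}/√(2π) and φ''(y) = (y² − 1)φ(y). Then f attains its maximum over ℝ at y = 0 and sup_{y∈ℝ} f(y) = 2h/√(2π). -/
/-!
Over the common denominator `√(2π)`, `f y = ((h + α/3) + (c + 2αt/3) e^{-t}) / √(2π)` with
`t = y²/2` and `c = h - α/3`. Since `c ≥ 2α/3 ≥ 0`, the bound `e^t ≥ 1 + t` gives
`c + 2αt/3 ≤ c + c t ≤ c e^t`, so `f y ≤ (h + α/3 + c) / √(2π) = f 0 = 2h/√(2π)`.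
-/

open Real Set

lemma add_mul_le_mul_exp {b c t : ℝ} (hb : 0 ≤ b) (hbc : b ≤ c) (ht : 0 ≤ t) :
    c + b * t ≤ c * exp t :=
  calc c + b * t ≤ c * (t + 1) := by nlinarith
    _ ≤ c * exp t := mul_le_mul_of_nonneg_left (add_one_le_exp t) (hb.trans hbc)

lemma mul_exp_neg_sq_half_le {h α : ℝ} (hα0 : 0 ≤ α) (hαh : α ≤ h) (y : ℝ) :
    (h + α / 3 * (y ^ 2 - 1)) * exp (-y ^ 2 / 2) ≤ h - α / 3 := by
  have hbound : (h - α / 3) + 2 * α / 3 * (y ^ 2 / 2) ≤ (h - α / 3) * exp (y ^ 2 / 2) :=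
    add_mul_le_mul_exp (by positivity) (by linarith) (by positivity)
  rw [neg_div, exp_neg, ← div_eq_mul_inv, div_le_iff₀ (exp_pos _)]
  linarith

theorem max_at_zero_general (h α : ℝ) (hα0 : 0 ≤ α) (hαh : α ≤ h)
    (φ : ℝ → ℝ) (hφ : ∀ y, φ y = Real.exp (-y ^ 2 / 2) / Real.sqrt (2 * π))
    (f : ℝ → ℝ) (hf : ∀ y, f y = (h + α / 3) / Real.sqrt (2 * π) + h * φ y
      + (α / 3) * ((y ^ 2 - 1) * φ y)) :
    (∀ y : ℝ, f y ≤ f 0) ∧ (⨆ y : ℝ, f y) = 2 * h / Real.sqrt (2 * π) := by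
  have hf' : ∀ y, f y =
      ((h + α / 3) + (h + α / 3 * (y ^ 2 - 1)) * exp (-y ^ 2 / 2)) / √(2 * π) := by
    intro y
    rw [hf, hφ]
    ring
  have hf0 : f 0 = 2 * h / √(2 * π) := by
    rw [hf']
    norm_num
    ring
  have hmax : ∀ y, f y ≤ f 0 := by
    intro y
    rw [hf0, hf']
    gcongr
    linarith [mul_exp_neg_sq_half_le hα0 hαh y]
  exact ⟨hmax, hf0 ▸ ciSup_eq_of_forall_le_of_forall_lt_exists_gt hmax fun _ hw => ⟨0, hw⟩⟩

/-- for `h > 0` and `0 ≤ α ≤ h`, the function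
`f(y) = (h + α/3)/√(2π) + h·φ(y) + (α/3)·φ''(y)` attains its maximum over `ℝ` at `y = 0`,
with `sup f = 2h/√(2π)`. -/
theorem max_at_zero (h α : ℝ) (hh : 0 < h) (hα0 : 0 ≤ α) (hαh : α ≤ h)
    (φ : ℝ → ℝ) (hφ : ∀ y, φ y = Real.exp (-y ^ 2 / 2) / Real.sqrt (2 * π))
    (f : ℝ → ℝ) (hf : ∀ y, f y = (h + α / 3) / Real.sqrt (2 * π) + h * φ y
      + (α / 3) * ((y ^ 2 - 1) * φ y)) :
    (∀ y : ℝ, f y ≤ f 0) ∧ (⨆ y : ℝ, f y) = 2 * h / Real.sqrt (2 * π) :=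
  max_at_zero_general h α hα0 hαh φ hφ f hf
end

section
/- Let 0 ≤ h < α, and define f : ℝ → ℝ by f(y) = (h + α/3)/√(2π) + h·φ(y) + (α/3)·φ''(y), where φ(y) = e^{−y²/2}/√(2π) and φ''(y) = (y² − 1)φ(y). Then with y₀ = √(3 − 3h/α), the function f attains its maximum over ℝ exactly at y = y₀ and y = −y₀, and sup_{y∈ℝ} f(y) = (1/√(2π)) · ( h + α/3 + (2α/3) · exp( −(3/2)(1 − h/α) ) ). -/
/-!
Writing `u = (y² - y₀²)/2`, the choice `y₀² = 3 - 3h/α` turns `h + (α/3)(y² - 1)` into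
`(2α/3)(u + 1)`, and `φ(y) = φ(y₀) e^{-u}`, so
`f(y) = (h + α/3)/√(2π) + (2α/3) φ(y₀) (u + 1) e^{-u}`.
Since `u + 1 ≤ eᵘ` with equality only at `u = 0`, the maximum is attained exactly where
`y² = y₀²`.
-/

open Real

lemma add_one_mul_exp_neg_le (t : ℝ) : (t + 1) * exp (-t) ≤ 1 := by
  rw [exp_neg, ← div_eq_mul_inv, div_le_one (exp_pos t)]
  exact add_one_le_exp t

lemma add_one_mul_exp_neg_eq_one_iff (t : ℝ) : (t + 1) * exp (-t) = 1 ↔ t = 0 := by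
  refine ⟨fun ht => ?_, fun ht => by simp [ht]⟩
  by_contra ht₀
  rw [exp_neg, ← div_eq_mul_inv, div_eq_one_iff_eq (exp_pos t).ne'] at ht
  exact (add_one_lt_exp ht₀).ne ht

lemma mul_gaussian_add_hermite_mul_gaussian_eq {h α y₀ : ℝ}
    (hy₀ : α * y₀ ^ 2 = 3 * α - 3 * h) (s y : ℝ) :
    h * (exp (-y ^ 2 / 2) / s) + α / 3 * ((y ^ 2 - 1) * (exp (-y ^ 2 / 2) / s)) =
      2 * α / 3 * (exp (-y₀ ^ 2 / 2) / s) *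
        (((y ^ 2 - y₀ ^ 2) / 2 + 1) * exp (-((y ^ 2 - y₀ ^ 2) / 2))) := by
  rw [show -y ^ 2 / 2 = -y₀ ^ 2 / 2 + -((y ^ 2 - y₀ ^ 2) / 2) by ring, exp_add]
  linear_combination exp (-y₀ ^ 2 / 2) * exp (-((y ^ 2 - y₀ ^ 2) / 2)) / (3 * s) * hy₀

/-- for `0 ≤ h < α`, the function
`f(y) = (h + α/3)/√(2π) + h·φ(y) + (α/3)·φ''(y)` attains its maximum over `ℝ` exactly at
`y = ±y₀` with `y₀ = √(3 − 3h/α)`, and the maximal value is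
`(1/√(2π))·(h + α/3 + (2α/3)·exp(−(3/2)(1 − h/α)))`. -/
theorem max_at_pm_y0 (h α : ℝ) (hh : 0 ≤ h) (hαh : h < α)
    (φ : ℝ → ℝ) (hφ : ∀ y, φ y = Real.exp (-y ^ 2 / 2) / Real.sqrt (2 * π))
    (f : ℝ → ℝ) (hf : ∀ y, f y = (h + α / 3) / Real.sqrt (2 * π) + h * φ y
      + (α / 3) * ((y ^ 2 - 1) * φ y))
    (y₀ : ℝ) (hy₀ : y₀ = Real.sqrt (3 - 3 * h / α)) :
    (∀ y : ℝ, f y ≤ f y₀) ∧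
    (∀ y : ℝ, f y = f y₀ ↔ y = y₀ ∨ y = -y₀) ∧
    (⨆ y : ℝ, f y) =
      (1 / Real.sqrt (2 * π)) *
        (h + α / 3 + (2 * α / 3) * Real.exp (-(3 / 2) * (1 - h / α))) := by
  have hα : 0 < α := hh.trans_lt hαh
  have hy₀sq : y₀ ^ 2 = 3 - 3 * h / α := by
    rw [hy₀, sq_sqrt]
    rw [sub_nonneg, div_le_iff₀ hα]
    linarith
  have hαy₀ : α * y₀ ^ 2 = 3 * α - 3 * h := by
    rw [hy₀sq]; field_simp
  set K := 2 * α / 3 * φ y₀ with hK_def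
  have hK : 0 < K := by rw [hK_def, hφ]; positivity
  have hrepr : ∀ y, f y = (h + α / 3) / √(2 * π) +
      K * (((y ^ 2 - y₀ ^ 2) / 2 + 1) * exp (-((y ^ 2 - y₀ ^ 2) / 2))) := fun y => by
    rw [hf, add_assoc, hφ, hK_def, hφ, mul_gaussian_add_hermite_mul_gaussian_eq hαy₀]
  have hfy₀ : f y₀ = (h + α / 3) / √(2 * π) + K := by simpa using hrepr y₀
  have hle : ∀ y, f y ≤ f y₀ := fun y => by
    rw [hrepr, hfy₀]
    gcongr
    exact mul_le_of_le_one_right hK.le (add_one_mul_exp_neg_le _)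
  refine ⟨hle, fun y => ?_, ?_⟩
  · rw [hrepr, hfy₀, add_right_inj, mul_eq_left₀ hK.ne', add_one_mul_exp_neg_eq_one_iff,
      div_eq_zero_iff, sub_eq_zero, sq_eq_sq_iff_eq_or_eq_neg]
    norm_num
  · rw [ciSup_eq_of_forall_le_of_forall_lt_exists_gt hle fun _ hw => ⟨y₀, hw⟩,
      hfy₀, hK_def, hφ, hy₀sq]
    field_simp
end

section
/- Let X and Y be independent real-valued random variables with the same discrete law P satisfying E X² < ∞ and E X = 0, and let η ∈ [0,∞) be such that whenever x, y ∈ ℝ satisfy 0 < |x − y| < η, at least one of P({x}), P({y}) vanishes. Then 2·E X² = E (X − Y)² ≥ η · E|X − Y| ≥ η · E|X|, and equality holds in the first inequality if and only if P = λδ_x + (1−λ)δ_{x+η} for some λ ∈ [0,1] and x ∈ ℝ. -/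
/-!
By independence `(X, Y)` has law `P ⊗ P`, so everything is a statement about `P`. Expanding the
square with `∫ x dP = 0` gives `E(X - Y)² = 2 E X²`, and Jensen in the second variable,
`|x| = |∫ (x - y) dP(y)| ≤ ∫ |x - y| dP(y)`, gives `E|X| ≤ E|X - Y|`. As `P` is discrete,
`P ⊗ P`-almost every pair consists of two atoms, so by separation `X - Y = 0` or `|X - Y| ≥ η`
almost surely, whence `η |X - Y| ≤ (X - Y)²` pointwise. Equality of the integrals forces
`|x - y| ∈ {0, η}` for any two atoms `x, y`, so all atoms lie in some `{a, a + η}`; conversely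
for such a law the pointwise inequality is an equality.
-/

open MeasureTheory ProbabilityTheory Real Set

/-- A measure on `ℝ` is discrete if it is a (countable) sum of point masses. -/
def MeasureIsDiscrete (P : Measure ℝ) : Prop :=
  ∀ A : Set ℝ, MeasurableSet A → P A = ∑' x : A, P {(x : ℝ)}

section Atoms

variable {α β : Type*} [MeasurableSpace α] [MeasurableSpace β] {μ : Measure α}

lemma Filter.Eventually.of_measure_singleton_ne_zero {p : α → Prop} (h : ∀ᵐ x ∂μ, p x) {a : α}
    (ha : μ {a} ≠ 0) : p a := by
  by_contra hpa
  exact ha (measure_mono_null (singleton_subset_iff.mpr hpa) (ae_iff.mp h))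

lemma ae_prod_of_ae_of_ae [SFinite μ] {ν : Measure β} [SFinite ν] {p : α → Prop} {q : β → Prop}
    (hp : ∀ᵐ x ∂μ, p x) (hq : ∀ᵐ y ∂ν, q y) : ∀ᵐ z ∂μ.prod ν, p z.1 ∧ q z.2 :=
  (Measure.quasiMeasurePreserving_fst.ae hp).and (Measure.quasiMeasurePreserving_snd.ae hq)

lemma countable_setOf_measure_singleton_ne_zero [MeasurableSingletonClass α] [SFinite μ] :
    {x : α | μ {x} ≠ 0}.Countable := by
  simpa [pos_iff_ne_zero] using Measure.countable_meas_pos_of_disjoint_iUnion₀ (μ := μ)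
    (fun x => (measurableSet_singleton x).nullMeasurableSet)
    (fun _ _ hxy => (disjoint_singleton.mpr hxy).aedisjoint)

lemma ae_eq_or_eq_of_eq_smul_dirac_add_smul_dirac [MeasurableSingletonClass α] {a b : α}
    {c d : ENNReal} (hμ : μ = c • Measure.dirac a + d • Measure.dirac b) :
    ∀ᵐ t ∂μ, t = a ∨ t = b := by
  rw [hμ, ae_add_measure_iff]
  constructor <;> refine Measure.ae_smul_measure ?_ _ <;> simp [ae_dirac_eq]

lemma exists_eq_ofReal_smul_dirac_add_of_ae_eq_or_eq [MeasurableSingletonClass α]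
    [IsProbabilityMeasure μ] {a b : α} (h : ∀ᵐ t ∂μ, t = a ∨ t = b) :
    ∃ l : ℝ, 0 ≤ l ∧ l ≤ 1 ∧
      μ = ENNReal.ofReal l • Measure.dirac a + ENNReal.ofReal (1 - l) • Measure.dirac b := by
  by_cases hab : a = b
  · subst hab
    refine ⟨1, zero_le_one, le_rfl, ?_⟩
    have hμ := Measure.ae_mem_finset_iff (μ := μ) (s := {a}) |>.mp (by simpa using h)
    have hone : μ {a} = 1 := by simpa [eq_comm] using congrArg (fun ν : Measure α => ν univ) hμ
    simpa [hone] using hμ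
  · rw [Measure.ae_eq_or_eq_iff_eq_dirac_add_dirac hab] at h
    have hsum : μ {a} + μ {b} = 1 := by
      simpa [eq_comm] using congrArg (fun ν : Measure α => ν univ) h
    refine ⟨μ.real {a}, measureReal_nonneg, measureReal_le_one, ?_⟩
    rw [ENNReal.ofReal_sub _ measureReal_nonneg, ofReal_measureReal, ENNReal.ofReal_one,
      ← ENNReal.eq_sub_of_add_eq (measure_ne_top μ {a}) ((add_comm _ _).trans hsum)]
    exact h

end Atoms

lemma MeasureIsDiscrete.ae_measure_singleton_ne_zero {P : Measure ℝ} [SFinite P]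
    (hP : MeasureIsDiscrete P) : ∀ᵐ x ∂P, P {x} ≠ 0 := by
  rw [ae_iff, show {x | ¬P {x} ≠ 0} = {x | P {x} ≠ 0}ᶜ from rfl,
    hP _ countable_setOf_measure_singleton_ne_zero.measurableSet.compl]
  simp

lemma MeasureIsDiscrete.ae_sub_eq_zero_or_le_abs_sub {P : Measure ℝ} [SFinite P] {η : ℝ}
    (hP : MeasureIsDiscrete P)
    (hsep : ∀ x y : ℝ, 0 < |x - y| → |x - y| < η → P {x} = 0 ∨ P {y} = 0) :
    ∀ᵐ z ∂P.prod P, z.1 - z.2 = 0 ∨ η ≤ |z.1 - z.2| := by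
  filter_upwards [ae_prod_of_ae_of_ae hP.ae_measure_singleton_ne_zero
    hP.ae_measure_singleton_ne_zero] with z ⟨hx, hy⟩
  by_contra! h
  exact (hsep z.1 z.2 (abs_pos.mpr h.1) h.2).elim hx hy

lemma exists_subset_pair_of_pairwise_abs_sub_eq {A : Set ℝ} {η : ℝ}
    (hA : A.Pairwise fun x y => |x - y| = η) : ∃ a, A ⊆ {a, a + η} := by
  rcases A.eq_empty_or_nonempty with rfl | ⟨a₀, ha₀⟩
  · exact ⟨0, empty_subset _⟩
  have near : ∀ x ∈ A, x = a₀ - η ∨ x = a₀ ∨ x = a₀ + η := by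
    intro x hx
    by_cases hxa : x = a₀
    · exact Or.inr (Or.inl hxa)
    rcases eq_or_eq_neg_of_abs_eq (hA hx ha₀ hxa) with h | h
    · exact Or.inr (Or.inr (by linarith))
    · exact Or.inl (by linarith)
  by_cases hlow : a₀ - η ∈ A
  · refine ⟨a₀ - η, fun x hx => ?_⟩
    rcases near x hx with h | h | h
    · exact Or.inl h
    · exact Or.inr (by simp [h])
    by_cases hx' : x = a₀ - η
    · exact Or.inl hx'
    -- `x = a₀ + η` and `a₀ - η` are at distance `2 * η`, which must be `η`
    have hη : η = 0 := by
      rcases eq_or_eq_neg_of_abs_eq (hA hx hlow hx') with h' | h' <;> linarith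
    exact Or.inr (by simp [h, hη])
  · refine ⟨a₀, fun x hx => ?_⟩
    rcases near x hx with h | h | h
    · exact absurd (h ▸ hx) hlow
    · exact Or.inl h
    · exact Or.inr h

lemma mul_abs_le_sq_of_eq_zero_or_le_abs {η d : ℝ} (h : d = 0 ∨ η ≤ |d|) : η * |d| ≤ d ^ 2 := by
  rcases h with rfl | h
  · simp
  · rw [← sq_abs]; nlinarith [abs_nonneg d]

lemma sq_eq_mul_abs_iff {η d : ℝ} : d ^ 2 = η * |d| ↔ d = 0 ∨ |d| = η := by
  rw [← sq_abs, ← abs_eq_zero, sq, mul_comm η, mul_eq_mul_left_iff, or_comm]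

section Law

variable {P : Measure ℝ} [IsProbabilityMeasure P]

lemma integral_sub_sq_prod_self (h2 : MemLp (fun x : ℝ => x) 2 P) (h0 : ∫ x, x ∂P = 0) :
    ∫ z, (z.1 - z.2) ^ 2 ∂P.prod P = 2 * ∫ x, x ^ 2 ∂P := by
  have h1 : Integrable (fun x : ℝ => x) P := h2.integrable one_le_two
  have hexpand : (fun z : ℝ × ℝ => (z.1 - z.2) ^ 2)
      = fun z => z.1 ^ 2 + z.2 ^ 2 - 2 * (z.1 * z.2) := by
    ext z; ring
  have hsq₁ : Integrable (fun z : ℝ × ℝ => z.1 ^ 2) (P.prod P) := h2.integrable_sq.comp_fst P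
  have hsq₂ : Integrable (fun z : ℝ × ℝ => z.2 ^ 2) (P.prod P) := h2.integrable_sq.comp_snd P
  have hmul : Integrable (fun z : ℝ × ℝ => 2 * (z.1 * z.2)) (P.prod P) :=
    (h1.mul_prod h1).const_mul 2
  rw [hexpand, integral_sub (f := fun z => z.1 ^ 2 + z.2 ^ 2) (hsq₁.add hsq₂) hmul,
    integral_add hsq₁ hsq₂, integral_const_mul,
    integral_fun_fst (fun x : ℝ => x ^ 2), integral_fun_snd (fun x : ℝ => x ^ 2),
    integral_prod_mul (fun x : ℝ => x) (fun x : ℝ => x), h0]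
  simp only [probReal_univ, smul_eq_mul, one_mul, mul_zero, sub_zero]
  ring

lemma integral_abs_le_integral_abs_sub_prod_self (h1 : Integrable (fun x => x) P)
    (h0 : ∫ x, x ∂P = 0) : ∫ x, |x| ∂P ≤ ∫ z, |z.1 - z.2| ∂P.prod P := by
  have hsub : Integrable (fun z : ℝ × ℝ => z.1 - z.2) (P.prod P) :=
    (h1.comp_fst P).sub (h1.comp_snd P)
  rw [integral_prod _ hsub.abs]
  refine integral_mono h1.abs ?_ fun x => ?_
  · simpa only [Real.norm_eq_abs] using hsub.integral_norm_prod_left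
  calc |x| = |∫ y, (x - y) ∂P| := by
        rw [integral_sub (integrable_const x) h1, h0]; simp
    _ ≤ ∫ y, |x - y| ∂P := abs_integral_le_integral_abs

variable {η : ℝ}

lemma mul_integral_abs_sub_le_integral_sub_sq (h2 : MemLp (fun x : ℝ => x) 2 P)
    (hsep : ∀ᵐ z ∂P.prod P, z.1 - z.2 = 0 ∨ η ≤ |z.1 - z.2|) :
    η * ∫ z, |z.1 - z.2| ∂P.prod P ≤ ∫ z, (z.1 - z.2) ^ 2 ∂P.prod P := by
  have hsub : MemLp (fun z : ℝ × ℝ => z.1 - z.2) 2 (P.prod P) :=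
    (h2.comp_fst P).sub (h2.comp_snd P)
  rw [← integral_const_mul]
  exact integral_mono_ae ((hsub.integrable one_le_two).abs.const_mul η) hsub.integrable_sq
    (hsep.mono fun _ => mul_abs_le_sq_of_eq_zero_or_le_abs)

lemma integral_sub_sq_eq_mul_integral_abs_sub_iff (hP : MeasureIsDiscrete P)
    (h2 : MemLp (fun x : ℝ => x) 2 P) (hη : 0 ≤ η)
    (hsep : ∀ᵐ z ∂P.prod P, z.1 - z.2 = 0 ∨ η ≤ |z.1 - z.2|) :
    ∫ z, (z.1 - z.2) ^ 2 ∂P.prod P = η * ∫ z, |z.1 - z.2| ∂P.prod P ↔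
      ∃ (l : ℝ) (x : ℝ), 0 ≤ l ∧ l ≤ 1 ∧
        P = ENNReal.ofReal l • Measure.dirac x
          + ENNReal.ofReal (1 - l) • Measure.dirac (x + η) := by
  have hsub : MemLp (fun z : ℝ × ℝ => z.1 - z.2) 2 (P.prod P) :=
    (h2.comp_fst P).sub (h2.comp_snd P)
  rw [← integral_const_mul, eq_comm, integral_eq_iff_of_ae_le
    ((hsub.integrable one_le_two).abs.const_mul η) hsub.integrable_sq
    (hsep.mono fun _ => mul_abs_le_sq_of_eq_zero_or_le_abs)]
  constructor
  · intro heq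
    have hatoms : {x : ℝ | P {x} ≠ 0}.Pairwise fun x y => |x - y| = η := by
      intro x hx y hy hxy
      have hxy_atom : P.prod P {(x, y)} ≠ 0 := by
        rw [← singleton_prod_singleton, Measure.prod_prod]
        exact mul_ne_zero hx hy
      exact (sq_eq_mul_abs_iff.mp (heq.of_measure_singleton_ne_zero hxy_atom).symm).resolve_left
        (sub_ne_zero.mpr hxy)
    obtain ⟨a, ha⟩ := exists_subset_pair_of_pairwise_abs_sub_eq hatoms
    obtain ⟨l, hl⟩ := exists_eq_ofReal_smul_dirac_add_of_ae_eq_or_eq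
      (hP.ae_measure_singleton_ne_zero.mono fun _ hx => ha hx)
    exact ⟨l, a, hl⟩
  · rintro ⟨l, x, -, -, hPx⟩
    have hx := ae_eq_or_eq_of_eq_smul_dirac_add_smul_dirac hPx
    filter_upwards [ae_prod_of_ae_of_ae hx hx] with z hz
    rcases hz with ⟨h₁ | h₁, h₂ | h₂⟩ <;> simp [h₁, h₂, abs_of_nonneg hη, sq]

end Law

/-- for `X, Y` independent with the same discrete centered square-integrable
law `P` whose atoms are at mutual distance `≥ η`:
`2·E X² = E(X−Y)² ≥ η·E|X−Y| ≥ η·E|X|`, with equality in the first inequality iff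
`P = λδ_x + (1−λ)δ_{x+η}`. -/
theorem two_point_equality {Ω : Type*} [MeasurableSpace Ω] (μ : Measure Ω)
    [IsProbabilityMeasure μ] (X Y : Ω → ℝ) (hX : Measurable X) (hY : Measurable Y)
    (hindep : IndepFun X Y μ) (P : Measure ℝ)
    (hPX : Measure.map X μ = P) (hPY : Measure.map Y μ = P)
    (hdisc : MeasureIsDiscrete P)
    (hint : Integrable (fun ω => (X ω) ^ 2) μ) (hmean : ∫ ω, X ω ∂μ = 0)
    (η : ℝ) (hη : 0 ≤ η)
    (hsep : ∀ x y : ℝ, 0 < |x - y| → |x - y| < η → P {x} = 0 ∨ P {y} = 0) :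
    2 * ∫ ω, (X ω) ^ 2 ∂μ = ∫ ω, (X ω - Y ω) ^ 2 ∂μ ∧
    (∫ ω, (X ω - Y ω) ^ 2 ∂μ) ≥ η * ∫ ω, |X ω - Y ω| ∂μ ∧
    η * ∫ ω, |X ω - Y ω| ∂μ ≥ η * ∫ ω, |X ω| ∂μ ∧
    ((∫ ω, (X ω - Y ω) ^ 2 ∂μ) = η * ∫ ω, |X ω - Y ω| ∂μ ↔
      ∃ (l : ℝ) (x : ℝ), 0 ≤ l ∧ l ≤ 1 ∧
        P = ENNReal.ofReal l • Measure.dirac x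
            + ENNReal.ofReal (1 - l) • Measure.dirac (x + η)) := by
  have : IsProbabilityMeasure P := hPX ▸ Measure.isProbabilityMeasure_map hX.aemeasurable
  have hpair : μ.map (fun ω => (X ω, Y ω)) = P.prod P := by
    rw [(indepFun_iff_map_prod_eq_prod_map_map hX.aemeasurable hY.aemeasurable).mp hindep,
      hPX, hPY]
  have hlawXY : ∀ f : ℝ × ℝ → ℝ, Measurable f → ∫ ω, f (X ω, Y ω) ∂μ = ∫ z, f z ∂P.prod P :=
    fun f hf => by rw [← hpair, integral_map (hX.prodMk hY).aemeasurable hf.aestronglyMeasurable]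
  have hlawX : ∀ f : ℝ → ℝ, Measurable f → ∫ ω, f (X ω) ∂μ = ∫ x, f x ∂P :=
    fun f hf => by rw [← hPX, integral_map hX.aemeasurable hf.aestronglyMeasurable]
  have h2 : MemLp (fun x : ℝ => x) 2 P := by
    refine (memLp_two_iff_integrable_sq (by fun_prop)).mpr ?_
    rw [← hPX, integrable_map_measure (by fun_prop) hX.aemeasurable]
    exact hint
  have hmeanP : ∫ x, x ∂P = 0 := (hlawX (fun x => x) measurable_id).symm.trans hmean
  have hsepP := hdisc.ae_sub_eq_zero_or_le_abs_sub hsep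
  rw [hlawXY (fun z => (z.1 - z.2) ^ 2) (by fun_prop),
    hlawXY (fun z => |z.1 - z.2|) (by fun_prop),
    hlawX (fun x => x ^ 2) (by fun_prop), hlawX (fun x => |x|) (by fun_prop)]
  exact ⟨(integral_sub_sq_prod_self h2 hmeanP).symm,
    mul_integral_abs_sub_le_integral_sub_sq h2 hsepP,
    mul_le_mul_of_nonneg_left
      (integral_abs_le_integral_abs_sub_prod_self (h2.integrable one_le_two) hmeanP) hη,
    integral_sub_sq_eq_mul_integral_abs_sub_iff hdisc h2 hη hsepP⟩
end

section
/- For every lattice law P on ℝ with 0 < β₃(P) < ∞, maximal span h = h(P), and standard deviation σ = σ(P), one has h ≤ 2β₃(P)/σ²(P), i.e., h·β₂(P) ≤ 2β₃(P), with equality if and only if P = (δ_x + δ_{x+h})/2 for some x ∈ ℝ. -/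
open MeasureTheory ProbabilityTheory Real Set ENNReal

noncomputable def beta (s : ℝ) (P : Measure ℝ) : ℝ := ∫ x, |x - mu P| ^ s ∂P

/-- `P` is a lattice law: concentrated on some `a + ηℤ` with `η > 0`. -/
def IsLattice (P : Measure ℝ) : Prop :=
  ∃ a η : ℝ, 0 < η ∧ P {x : ℝ | ∃ k : ℤ, x = a + η * k} = 1

/-- The maximal span of a lattice law. -/
noncomputable def latticeSpan (P : Measure ℝ) : ℝ :=
  sSup (⋃ a : ℝ, {η : ℝ | 0 < η ∧ P {x : ℝ | ∃ k : ℤ, x = a + η * k} = 1})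

/-!
Centre the law: `t = x - μ(P)`. If `P` lives on `a + ηℤ`, then `t` lives on `t₀ + ηℤ` for some
`|t₀| ≤ η / 2`, and on that lattice the cubic `2 |t|³ - η t² + c t` with `c = t₀ (η - 2 |t₀|)` is
nonnegative; it vanishes only at `t₀` and, when `|t₀| = η / 2`, also at `-t₀`. The linear term
integrates to `0`, so integrating gives `η β₂ ≤ 2 β₃`, and equality forces `t ∈ {±η/2}` almost
surely (a single point is excluded by `β₃ > 0`), where a centred law must put mass `1/2` on each
point. For `η` the maximal span one needs that the supremum is attained: every admissible span
is of the form `|u - v| / n` for two fixed distinct atoms `u, v` of `P`.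
-/

def latticeSet (a η : ℝ) : Set ℝ := {x | ∃ k : ℤ, x = a + η * k}

lemma countable_latticeSet (a η : ℝ) : (latticeSet a η).Countable := by
  have : latticeSet a η = range fun k : ℤ => a + η * k := by
    ext x; simp [latticeSet, eq_comm]
  exact this ▸ countable_range _

lemma neg_mem_latticeSet {a η t : ℝ} (ht : t ∈ latticeSet a η) : -t ∈ latticeSet (-a) η := by
  obtain ⟨k, rfl⟩ := ht
  exact ⟨-k, by push_cast; ring⟩

lemma exists_abs_le_half_sub_mem_latticeSet {η : ℝ} (hη : 0 < η) (a b : ℝ) :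
    ∃ t₀, 2 * |t₀| ≤ η ∧ ∀ x ∈ latticeSet a η, x - b ∈ latticeSet t₀ η := by
  set r := round ((a - b) / η)
  refine ⟨a - b - η * r, ?_, ?_⟩
  · have hr : |(a - b) / η - r| ≤ 1 / 2 := abs_sub_round _
    rw [show a - b - η * r = η * ((a - b) / η - r) by field_simp, abs_mul, abs_of_pos hη]
    nlinarith
  · rintro x ⟨k, rfl⟩
    exact ⟨r + k, by push_cast; ring⟩

def cubicTest (η c t : ℝ) : ℝ := 2 * |t| ^ 3 - η * t ^ 2 + c * t

lemma cubicTest_neg (η c t : ℝ) : cubicTest η (-c) (-t) = cubicTest η c t := by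
  simp only [cubicTest, abs_neg]; ring

lemma cubicTest_nonneg_of_nonneg {η t₀ t : ℝ} (hη : 0 < η) (ht₀ : 0 ≤ t₀) (ht₀η : 2 * t₀ ≤ η)
    (ht : t ∈ latticeSet t₀ η) :
    0 ≤ cubicTest η (t₀ * (η - 2 * t₀)) t ∧
      (cubicTest η (t₀ * (η - 2 * t₀)) t = 0 → t = t₀ ∨ (2 * t₀ = η ∧ t = -t₀)) := by
  obtain ⟨k, rfl⟩ := ht
  rcases lt_trichotomy k 0 with hk | rfl | hk
  · have hk' : (k : ℝ) ≤ -1 := by exact_mod_cast Int.le_sub_one_of_lt hk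
    set u := -(t₀ + η * k) with hu
    have hu_ge : η - t₀ ≤ u := by nlinarith
    have hval : cubicTest η (t₀ * (η - 2 * t₀)) (t₀ + η * k) =
        u * (u * (2 * u - η) - t₀ * (η - 2 * t₀)) := by
      rw [cubicTest, abs_of_neg (by linarith), hu]; ring
    -- `u ≥ η - t₀ ≥ η / 2`, so `u (2u - η) ≥ (η - t₀) (η - 2t₀) ≥ t₀ (η - 2t₀)`
    have hgap : t₀ * (η - 2 * t₀) ≤ u * (2 * u - η) := by nlinarith
    rw [hval]
    refine ⟨by nlinarith, fun hz => Or.inr ?_⟩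
    rcases mul_eq_zero.1 hz with hz | hz
    · linarith
    · have hhalf : 2 * t₀ = η := by nlinarith
      exact ⟨hhalf, by nlinarith⟩
  · have hval : cubicTest η (t₀ * (η - 2 * t₀)) (t₀ + η * (0 : ℤ)) = 0 := by
      rw [Int.cast_zero, mul_zero, add_zero, cubicTest, abs_of_nonneg ht₀]; ring
    exact ⟨hval.ge, fun _ => Or.inl (by simp)⟩
  · have hk' : (1 : ℝ) ≤ k := by exact_mod_cast hk
    set t := t₀ + η * k
    have hval : cubicTest η (t₀ * (η - 2 * t₀)) t = 2 * t * (t - t₀) * (t - (η / 2 - t₀)) := by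
      rw [cubicTest, abs_of_pos (by nlinarith)]; ring
    have hpos : 0 < cubicTest η (t₀ * (η - 2 * t₀)) t := by
      have : t₀ + η ≤ t := by nlinarith
      rw [hval]
      apply _root_.mul_pos (_root_.mul_pos _ _) _ <;> nlinarith
    exact ⟨hpos.le, fun hz => absurd hz hpos.ne'⟩

lemma cubicTest_nonneg {η t₀ t : ℝ} (hη : 0 < η) (ht₀ : 2 * |t₀| ≤ η)
    (ht : t ∈ latticeSet t₀ η) :
    0 ≤ cubicTest η (t₀ * (η - 2 * |t₀|)) t ∧
      (cubicTest η (t₀ * (η - 2 * |t₀|)) t = 0 → t = t₀ ∨ (2 * |t₀| = η ∧ t = -t₀)) := by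
  rcases le_or_gt 0 t₀ with h0 | h0
  · rw [abs_of_nonneg h0] at ht₀ ⊢
    exact cubicTest_nonneg_of_nonneg hη h0 ht₀ ht
  · rw [abs_of_neg h0] at ht₀ ⊢
    have key := cubicTest_nonneg_of_nonneg hη (neg_nonneg.2 h0.le) ht₀ (neg_mem_latticeSet ht)
    rw [← cubicTest_neg, neg_neg, show -(-t₀ * (η - 2 * -t₀)) = t₀ * (η - 2 * -t₀) by ring] at key
    refine ⟨key.1, fun hz => ?_⟩
    rcases key.2 hz with h1 | ⟨h1, h2⟩
    · exact Or.inl (neg_injective h1)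
    · exact Or.inr ⟨h1, by linarith⟩

section Moments

variable {P : Measure ℝ}

lemma memLp_id_three (hInt : Integrable (fun x => |x| ^ 3) P) : MemLp id 3 P := by
  rw [← integrable_norm_rpow_iff aestronglyMeasurable_id (by norm_num) (by norm_num)]
  simpa [Real.norm_eq_abs] using hInt

lemma beta_two_eq_integral_sq : beta 2 P = ∫ x, (x - mu P) ^ 2 ∂P := by
  simp [_root_.beta]

lemma beta_three_eq_integral_abs_pow : beta 3 P = ∫ x, |x - mu P| ^ 3 ∂P := by
  simp only [_root_.beta]; norm_cast

lemma integrable_cubicTest_and_integral_eq [IsProbabilityMeasure P]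
    (hInt : Integrable (fun x => |x| ^ 3) P) (η c : ℝ) :
    Integrable (fun x => cubicTest η c (x - mu P)) P ∧
      ∫ x, cubicTest η c (x - mu P) ∂P = 2 * beta 3 P - η * beta 2 P := by
  have hid := memLp_id_three hInt
  have hm : MemLp (fun x => x - mu P) 3 P := hid.sub (memLp_const (mu P))
  have h3 : Integrable (fun x => 2 * |x - mu P| ^ 3) P := by
    simpa [Real.norm_eq_abs] using (hm.integrable_norm_pow three_ne_zero).const_mul 2
  have h2 : Integrable (fun x => η * (x - mu P) ^ 2) P := by
    have hm2 : MemLp (fun x => x - mu P) 2 P := hm.mono_exponent (by norm_num)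
    simpa [Real.norm_eq_abs] using (hm2.integrable_norm_pow two_ne_zero).const_mul η
  have h32 : Integrable (fun x => 2 * |x - mu P| ^ 3 - η * (x - mu P) ^ 2) P := h3.sub h2
  have h1 : Integrable (fun x => c * (x - mu P)) P := (hm.integrable (by norm_num)).const_mul c
  have hmean : ∫ x, (x - mu P) ∂P = 0 := by
    rw [integral_sub (f := fun x => x) (hid.integrable (by norm_num)) (integrable_const _)]
    simp [mu]
  refine ⟨h32.add h1, ?_⟩
  simp only [cubicTest]
  rw [integral_add h32 h1, integral_sub h3 h2, integral_const_mul, integral_const_mul,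
    integral_const_mul, hmean, beta_two_eq_integral_sq, beta_three_eq_integral_abs_pow]
  ring

end Moments

section Lattice

variable {P : Measure ℝ} [IsProbabilityMeasure P] {a η : ℝ}

lemma ae_mem_latticeSet (hL : P (latticeSet a η) = 1) : ∀ᵐ x ∂P, x ∈ latticeSet a η :=
  (ae_mem_iff_measure_eq (countable_latticeSet a η).measurableSet.nullMeasurableSet).2
    (by rw [hL, measure_univ])

lemma exists_ae_cubicTest_nonneg (hη : 0 < η) (hL : P (latticeSet a η) = 1) :
    ∃ t₀, ∀ᵐ x ∂P, 0 ≤ cubicTest η (t₀ * (η - 2 * |t₀|)) (x - mu P) ∧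
      (cubicTest η (t₀ * (η - 2 * |t₀|)) (x - mu P) = 0 →
        x - mu P = t₀ ∨ (2 * |t₀| = η ∧ x - mu P = -t₀)) := by
  obtain ⟨t₀, ht₀, hsub⟩ := exists_abs_le_half_sub_mem_latticeSet hη a (mu P)
  exact ⟨t₀, (ae_mem_latticeSet hL).mono fun x hx => cubicTest_nonneg hη ht₀ (hsub x hx)⟩

variable (hInt : Integrable (fun x => |x| ^ 3) P)
include hInt

lemma mul_beta_two_le_of_latticeSet (hη : 0 < η) (hL : P (latticeSet a η) = 1) :
    η * beta 2 P ≤ 2 * beta 3 P := by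
  obtain ⟨t₀, ht₀⟩ := exists_ae_cubicTest_nonneg hη hL
  have := integral_nonneg_of_ae (ht₀.mono fun x hx => hx.1)
  linarith [(integrable_cubicTest_and_integral_eq hInt η (t₀ * (η - 2 * |t₀|))).2]

lemma ae_two_point_of_mul_beta_two_eq (hη : 0 < η) (hL : P (latticeSet a η) = 1)
    (hnd : ∀ z, ¬∀ᵐ x ∂P, x = z) (heq : η * beta 2 P = 2 * beta 3 P) :
    ∀ᵐ x ∂P, x = mu P - η / 2 ∨ x = mu P - η / 2 + η := by
  obtain ⟨t₀, ht₀⟩ := exists_ae_cubicTest_nonneg hη hL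
  obtain ⟨hint, hval⟩ := integrable_cubicTest_and_integral_eq hInt η (t₀ * (η - 2 * |t₀|))
  have hzero := (integral_eq_zero_iff_of_nonneg_ae (ht₀.mono fun x hx => hx.1) hint).1
    (by rw [hval]; linarith)
  have hcases : ∀ᵐ x ∂P, x - mu P = t₀ ∨ (2 * |t₀| = η ∧ x - mu P = -t₀) := by
    filter_upwards [ht₀, hzero] with x hx hx0 using hx.2 hx0
  by_cases hhalf : 2 * |t₀| = η
  · filter_upwards [hcases] with x hx
    have habs : |x - mu P| = η / 2 := by
      rcases hx with hx | ⟨-, hx⟩ <;> rw [hx, ← hhalf] <;> simp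
    rcases (abs_eq (by positivity)).1 habs with h | h
    · right; linarith
    · left; linarith
  · refine absurd (hcases.mono fun x hx => ?_) (hnd (mu P + t₀))
    rcases hx with hx | ⟨h, -⟩
    · linarith
    · exact absurd h hhalf

end Lattice

section Atoms

variable {α : Type*} [MeasurableSpace α] {μ : Measure α} {s : Set α}

lemma mem_of_ae_mem_of_measure_singleton_ne_zero {u : α} (hs : ∀ᵐ x ∂μ, x ∈ s)
    (hu : μ {u} ≠ 0) : u ∈ s := by
  by_contra hus
  exact hu (measure_mono_null (singleton_subset_iff.2 hus) (ae_iff.1 hs))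

lemma ae_measure_singleton_ne_zero_of_countable (hsc : s.Countable) (hs : ∀ᵐ x ∂μ, x ∈ s) :
    ∀ᵐ x ∂μ, μ {x} ≠ 0 := by
  have hnull : μ (s ∩ {x | μ {x} = 0}) = 0 := by
    rw [← biUnion_of_singleton (s ∩ _), measure_biUnion_null_iff (hsc.mono inter_subset_left)]
    exact fun x hx => hx.2
  filter_upwards [hs, measure_eq_zero_iff_ae_notMem.1 hnull] with x hx hx0
  exact fun h => hx0 ⟨hx, h⟩

lemma exists_ne_measure_singleton_ne_zero [NeZero μ] (hsc : s.Countable) (hs : ∀ᵐ x ∂μ, x ∈ s)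
    (hnd : ∀ z, ¬∀ᵐ x ∂μ, x = z) : ∃ u v, u ≠ v ∧ μ {u} ≠ 0 ∧ μ {v} ≠ 0 := by
  have hatoms := ae_measure_singleton_ne_zero_of_countable hsc hs
  obtain ⟨v, hv⟩ := hatoms.exists
  obtain ⟨u, hu, huv⟩ := ((Filter.not_eventually.1 (hnd v)).and_eventually hatoms).exists
  exact ⟨u, v, hu, huv, hv⟩

end Atoms

lemma exists_isGreatest_of_mul_nat_eq {S : Set ℝ} {D : ℝ} (hD : 0 ≤ D) (hne : S.Nonempty)
    (hS : ∀ η ∈ S, ∃ n : ℕ, 0 < n ∧ η * n = D) : ∃ η, IsGreatest S η := by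
  classical
  have hex : ∃ n : ℕ, ∃ η ∈ S, 0 < n ∧ η * n = D := by
    obtain ⟨η, hη⟩ := hne
    obtain ⟨n, hn⟩ := hS η hη
    exact ⟨n, η, hη, hn⟩
  obtain ⟨η₀, hη₀, hn₀, hη₀D⟩ := Nat.find_spec hex
  refine ⟨η₀, hη₀, fun η hη => ?_⟩
  obtain ⟨m, hm, hηD⟩ := hS η hη
  -- the element `D / n` is largest for the smallest admissible `n`
  have hle : (Nat.find hex : ℝ) ≤ m := by exact_mod_cast Nat.find_min' hex ⟨η, hη, hm, hηD⟩
  rw [eq_div_of_mul_eq (by positivity) hηD, eq_div_of_mul_eq (by positivity) hη₀D]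
  exact div_le_div_of_nonneg_left hD (by positivity) hle

lemma exists_latticeSet_latticeSpan {P : Measure ℝ} [IsProbabilityMeasure P] (hlat : IsLattice P)
    (hnd : ∀ z, ¬∀ᵐ x ∂P, x = z) :
    0 < latticeSpan P ∧ ∃ a, P (latticeSet a (latticeSpan P)) = 1 := by
  obtain ⟨a₀, η₀, hη₀, hL₀⟩ := hlat
  obtain ⟨u, v, huv, hu, hv⟩ := exists_ne_measure_singleton_ne_zero (countable_latticeSet a₀ η₀)
    (ae_mem_latticeSet hL₀) hnd
  set S := ⋃ a, {η | 0 < η ∧ P (latticeSet a η) = 1}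
  have hdiv : ∀ η ∈ S, ∃ n : ℕ, 0 < n ∧ η * n = |u - v| := by
    intro η hη
    obtain ⟨a, hη, hL⟩ := mem_iUnion.1 hη
    obtain ⟨k, hk⟩ := mem_of_ae_mem_of_measure_singleton_ne_zero (ae_mem_latticeSet hL) hu
    obtain ⟨j, hj⟩ := mem_of_ae_mem_of_measure_singleton_ne_zero (ae_mem_latticeSet hL) hv
    refine ⟨(k - j).natAbs, Int.natAbs_pos.2 (sub_ne_zero.2 ?_), ?_⟩
    · rintro rfl
      exact huv (hk.trans hj.symm)
    · rw [Nat.cast_natAbs, hk, hj, Int.cast_abs, Int.cast_sub, ← abs_of_pos hη, ← abs_mul,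
        abs_of_pos hη]
      ring_nf
  obtain ⟨η, hmax⟩ := exists_isGreatest_of_mul_nat_eq (abs_nonneg _)
    (⟨η₀, mem_iUnion.2 ⟨a₀, hη₀, hL₀⟩⟩ : S.Nonempty) hdiv
  have hspan : latticeSpan P = η := hmax.csSup_eq
  obtain ⟨a, hpos, hL⟩ := mem_iUnion.1 hmax.1
  exact hspan ▸ ⟨hpos, a, hL⟩

lemma beta_eq_zero_of_ae_eq_const {P : Measure ℝ} [IsProbabilityMeasure P] {s z : ℝ} (hs : s ≠ 0)
    (hz : ∀ᵐ x ∂P, x = z) : beta s P = 0 := by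
  have hmu : mu P = z := by
    rw [mu, integral_congr_ae hz]
    simp
  rw [_root_.beta, integral_congr_ae (g := fun _ => 0)]
  · simp
  · filter_upwards [hz] with x hx
    simp [hx, hmu, Real.zero_rpow hs]

lemma eq_half_smul_dirac_add_dirac {P : Measure ℝ} [IsProbabilityMeasure P] {u v : ℝ}
    (huv : u ≠ v) (hsupp : ∀ᵐ x ∂P, x = u ∨ x = v) (hmean : ∫ x, x ∂P = (u + v) / 2) :
    P = (2⁻¹ : ℝ≥0∞) • (Measure.dirac u + Measure.dirac v) := by
  have hdecomp : P = P {u} • Measure.dirac u + P {v} • Measure.dirac v := calc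
    P = P.restrict {u, v} := (Measure.restrict_eq_self_of_ae_mem hsupp).symm
    _ = P.restrict {u} + P.restrict {v} := by
      rw [← Measure.restrict_union (disjoint_singleton.2 huv) (measurableSet_singleton v),
        singleton_union]
    _ = _ := by rw [Measure.restrict_singleton, Measure.restrict_singleton]
  have hsum : P.real {u} + P.real {v} = 1 := by
    have := congrArg (fun Q : Measure ℝ => Q.real univ) hdecomp
    simpa [measureReal_def, ENNReal.toReal_add] using this.symm
  have hmean' : P.real {u} * u + P.real {v} * v = (u + v) / 2 := by
    rw [hdecomp, integral_add_measure, integral_smul_measure, integral_smul_measure,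
      integral_dirac, integral_dirac] at hmean
    · simpa [measureReal_def] using hmean
    all_goals exact (integrable_dirac (by simp)).smul_measure (measure_ne_top _ _)
  have hu : P.real {u} = 2⁻¹ := by
    have : (P.real {u} - 2⁻¹) * (u - v) = 0 := by linear_combination hmean' - v * hsum
    linarith [(mul_eq_zero.1 this).resolve_right (sub_ne_zero.2 huv)]
  have hv : P.real {v} = 2⁻¹ := by linarith
  rw [hdecomp, ← ofReal_measureReal, ← ofReal_measureReal, hu, hv,
    ENNReal.ofReal_inv_of_pos two_pos, ENNReal.ofReal_ofNat, smul_add]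

lemma integral_half_smul_dirac_add_dirac (f : ℝ → ℝ) (x y : ℝ) :
    ∫ t, f t ∂((2⁻¹ : ℝ≥0∞) • (Measure.dirac x + Measure.dirac y)) = (f x + f y) / 2 := by
  rw [integral_smul_measure, integral_add_measure (integrable_dirac (by simp))
    (integrable_dirac (by simp)), integral_dirac, integral_dirac]
  simp [ENNReal.toReal_inv]
  ring

lemma mul_beta_two_eq_of_eq_half_smul_dirac {P : Measure ℝ} {x η : ℝ} (hη : 0 ≤ η)
    (hP : P = (2⁻¹ : ℝ≥0∞) • (Measure.dirac x + Measure.dirac (x + η))) :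
    η * beta 2 P = 2 * beta 3 P := by
  subst hP
  have hmu : mu ((2⁻¹ : ℝ≥0∞) • (Measure.dirac x + Measure.dirac (x + η))) = x + η / 2 := by
    rw [mu, integral_half_smul_dirac_add_dirac]; ring
  rw [beta_two_eq_integral_sq, beta_three_eq_integral_abs_pow, integral_half_smul_dirac_add_dirac,
    integral_half_smul_dirac_add_dirac, hmu, show x - (x + η / 2) = -(η / 2) by ring,
    show x + η - (x + η / 2) = η / 2 by ring, abs_neg, abs_of_nonneg (by positivity)]
  ring

/-- for a lattice law `P` with `0 < β₃ < ∞` and maximal span `h`,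
`h·β₂ ≤ 2β₃`, with equality iff `P = (δ_x + δ_{x+h})/2` for some `x ∈ ℝ`. -/
theorem span_beta_two_le (P : Measure ℝ) (hP : IsProbabilityMeasure P)
    (hlat : IsLattice P) (hInt : Integrable (fun x => |x| ^ 3) P) (hpos : 0 < beta 3 P) :
    latticeSpan P * beta 2 P ≤ 2 * beta 3 P ∧
    (latticeSpan P * beta 2 P = 2 * beta 3 P ↔
      ∃ x : ℝ, P = (2⁻¹ : ℝ≥0∞) •
        (Measure.dirac x + Measure.dirac (x + latticeSpan P))) := by
  have hnd : ∀ z, ¬∀ᵐ x ∂P, x = z := fun z hz =>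
    hpos.ne' (beta_eq_zero_of_ae_eq_const three_ne_zero hz)
  obtain ⟨hspan, a, hL⟩ := exists_latticeSet_latticeSpan hlat hnd
  refine ⟨mul_beta_two_le_of_latticeSet hInt hspan hL, fun heq => ?_, ?_⟩
  · refine ⟨mu P - latticeSpan P / 2, eq_half_smul_dirac_add_dirac (by linarith)
      (ae_two_point_of_mul_beta_two_eq hInt hspan hL hnd heq) ?_⟩
    rw [← mu]
    ring
  · rintro ⟨x, hx⟩
    exact mul_beta_two_eq_of_eq_half_smul_dirac hspan.le hx
end
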